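/- arXiv:2502.19141 — 2 statements merged into one kernel-verified Lean document; each statement's English description precedes it below -/
import Mathlib

section
/- Let A ∈ F_q[X] be an additive polynomial that is not of the form aX^{p^h} with a ∈ F_q and h ≥ 0, let c_A := liminf_{n→∞} s_A(n)/n, and for b ∈ F_q* set A_b(X) = A(X) + b. Then the sequence {s_{A_b}(n)/n}_{n ≥ 1} is bounded and its set of limit points (cluster points) is contained in the closed interval [c_A, p²·c_A]. -/
set_option linter.unusedSectionVars false
set_option maxHeartbeats 1000000


open Polynomial Filter IntermediateField

/-- A polynomial over a field of characteristic `p` is additive iff every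
monomial with nonzero coefficient has exponent a power of `p`
(equivalently, `A(X) = ∑ aᵢ X^(pⁱ)`). -/
def IsAdditivePoly {F : Type*} [Field F] (p : ℕ) (A : Polynomial F) : Prop :=
  ∀ i : ℕ, A.coeff i ≠ 0 → ∃ h : ℕ, i = p ^ h

/-- `polyIter P n` is the `n`-fold composition `P^{(n)}` of `P` with itself,
with the convention `P^{(0)} = X`. -/
noncomputable def polyIter {F : Type*} [Field F] (P : Polynomial F) (n : ℕ) : Polynomial F :=
  (fun Q => P.comp Q)^[n] Polynomial.X

/-- `SplitsIn P j` : `P` splits completely over `F_{q^j}`, i.e. every root of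
`P` in an algebraic closure of `F` lies in the subfield with `q^j` elements,
where `q = #F`. -/
def SplitsIn {F : Type*} [Field F] [Fintype F] (P : Polynomial F) (j : ℕ) : Prop :=
  ∀ y : AlgebraicClosure F, Polynomial.aeval y P = 0 → y ^ Fintype.card F ^ j = y

/-- `sDeg P n` : the degree over `F_q` of the splitting field of the `n`-th
iterate `P^{(n)}`, i.e. the least positive `j` such that `P^{(n)}` splits
completely in `F_{q^j}`. -/
noncomputable def sDeg {F : Type*} [Field F] [Fintype F] (P : Polynomial F) (n : ℕ) : ℕ :=
  sInf {j : ℕ | 0 < j ∧ SplitsIn (polyIter P n) j}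


section Aux
variable {p : ℕ} [Fact p.Prime] {F : Type*} [Field F]

lemma aeval_add_of_additive {S : Type*} [CommRing S] [Algebra F S] [CharP S p]
    {A : Polynomial F} (hA : IsAdditivePoly p A) (x y : S) :
    aeval (x + y) A = aeval x A + aeval y A := by
  rw [aeval_eq_sum_range (p := A) (x+y), aeval_eq_sum_range (p := A) x,
    aeval_eq_sum_range (p := A) y, ← Finset.sum_add_distrib]
  refine Finset.sum_congr rfl fun i _ => ?_
  by_cases h : A.coeff i = 0
  · simp [h]
  · obtain ⟨h', rfl⟩ := hA i h
    rw [add_pow_char_pow, smul_add]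

lemma aeval_zero_of_additive {S : Type*} [CommRing S] [Algebra F S] [CharP S p]
    {A : Polynomial F} (hA : IsAdditivePoly p A) :
    aeval (0 : S) A = 0 := by
  have := aeval_add_of_additive (p := p) hA (0 : S) 0
  simpa using this.symm

lemma polyIter_succ {P : Polynomial F} (n : ℕ) :
    polyIter P (n + 1) = P.comp (polyIter P n) := by
  simp [polyIter, Function.iterate_succ_apply']

lemma polyIter_add_aeval {S : Type*} [CommRing S] [Algebra F S]
    (P : Polynomial F) (m n : ℕ) (x : S) :
    aeval x (polyIter P (m + n)) = aeval (aeval x (polyIter P n)) (polyIter P m) := by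
  induction m with
  | zero => simp [polyIter]
  | succ m ih =>
      have : m + 1 + n = (m + n) + 1 := by ring
      rw [this, polyIter_succ, polyIter_succ, aeval_comp, aeval_comp, ih]

lemma aeval_add_polyIter {S : Type*} [CommRing S] [Algebra F S] [CharP S p]
    {A : Polynomial F} (hA : IsAdditivePoly p A) (n : ℕ) (x y : S) :
    aeval (x + y) (polyIter A n) = aeval x (polyIter A n) + aeval y (polyIter A n) := by
  induction n with
  | zero => simp [polyIter]
  | succ n ih =>
      rw [polyIter_succ, aeval_comp, aeval_comp, aeval_comp, ih,
        aeval_add_of_additive hA]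

lemma aeval_zero_polyIter {S : Type*} [CommRing S] [Algebra F S] [CharP S p]
    {A : Polynomial F} (hA : IsAdditivePoly p A) (n : ℕ) :
    aeval (0 : S) (polyIter A n) = 0 := by
  have := aeval_add_polyIter (p := p) hA n (0 : S) 0
  simpa using this.symm

lemma aeval_sub_polyIter {S : Type*} [CommRing S] [Algebra F S] [CharP S p]
    {A : Polynomial F} (hA : IsAdditivePoly p A) (n : ℕ) (x y : S) :
    aeval (x - y) (polyIter A n) = aeval x (polyIter A n) - aeval y (polyIter A n) := by
  have hneg : aeval (-y) (polyIter A n) = - aeval y (polyIter A n) := by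
    have h0 := aeval_zero_polyIter (p := p) (S := S) hA n
    have := aeval_add_polyIter (p := p) hA n y (-y)
    rw [add_neg_cancel, h0] at this
    exact eq_neg_of_add_eq_zero_right this.symm
  rw [sub_eq_add_neg, aeval_add_polyIter (p := p) hA n, hneg, sub_eq_add_neg]

end Aux


section Aux2
variable (p : ℕ) [Fact p.Prime] {F : Type*} [Field F] [Fintype F] [CharP F p]

local notation "R" => AlgebraicClosure F
local notation "q" => Fintype.card F
include p

omit [Fact p.Prime] in
lemma card_eq : ∃ f : ℕ, 0 < f ∧ q = p ^ f := by
  obtain ⟨n, -, h⟩ := FiniteField.card F p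
  exact ⟨n, n.2, h⟩

lemma pow_q_add (j : ℕ) (x y : R) : (x + y) ^ q ^ j = x ^ q ^ j + y ^ q ^ j := by
  obtain ⟨f, -, hq⟩ := card_eq p (F := F)
  rw [hq, ← pow_mul, add_pow_char_pow]

lemma pow_q_sub (j : ℕ) (x y : R) : (x - y) ^ q ^ j = x ^ q ^ j - y ^ q ^ j := by
  obtain ⟨f, -, hq⟩ := card_eq p (F := F)
  rw [hq, ← pow_mul, sub_pow_char_pow]

omit p [Fact p.Prime] [CharP F p] in
lemma pow_q_algebraMap (j : ℕ) (a : F) :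
    (algebraMap F R a) ^ q ^ j = algebraMap F R a := by
  rw [← map_pow, FiniteField.pow_card_pow]

lemma pow_q_aeval (j : ℕ) (P : Polynomial F) (x : R) :
    (aeval x P) ^ q ^ j = aeval (x ^ q ^ j) P := by
  obtain ⟨f, -, hq⟩ := card_eq p (F := F)
  have hexp : q ^ j = p ^ (f * j) := by rw [hq, pow_mul]
  have h := Polynomial.hom_eval₂ P (algebraMap F R) (iterateFrobenius R p (f * j)) x
  rw [aeval_def, aeval_def, hexp]
  have hcomp : (iterateFrobenius R p (f * j)).comp (algebraMap F R) = algebraMap F R := by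
    ext a
    simp only [RingHom.coe_comp, Function.comp_apply, iterateFrobenius_def]
    rw [← map_pow, ← hexp, FiniteField.pow_card_pow]
  calc (eval₂ (algebraMap F R) x P) ^ p ^ (f * j)
      = iterateFrobenius R p (f * j) (eval₂ (algebraMap F R) x P) := by
        rw [iterateFrobenius_def]
    _ = eval₂ (algebraMap F R) (x ^ p ^ (f * j)) P := by
        rw [h, hcomp, iterateFrobenius_def]

omit p [Fact p.Prime] [CharP F p] in
lemma pow_q_pow_fix {d j : ℕ} (x : R) (hd : x ^ q ^ d = x) (hdj : d ∣ j) :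
    x ^ q ^ j = x := by
  obtain ⟨k, rfl⟩ := hdj
  induction k with
  | zero => simp
  | succ k ih => rw [Nat.mul_succ, pow_add, pow_mul, ih, hd]

end Aux2

section Aux3
variable {F : Type*} [Field F] [Fintype F]
local notation "R" => AlgebraicClosure F
local notation "q" => Fintype.card F

lemma splitsIn_of_dvd {P : Polynomial F} {j j' : ℕ} (h : SplitsIn P j) (hd : j ∣ j') :
    SplitsIn P j' :=
  fun y hy => pow_q_pow_fix y (h y hy) hd

lemma root_pow_card_fix (y : R) : ∃ d, 0 < d ∧ y ^ q ^ d = y := by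
  haveI : Algebra.IsIntegral F R := Algebra.IsAlgebraic.isIntegral
  have hint : IsIntegral F y := Algebra.IsIntegral.isIntegral y
  haveI : FiniteDimensional F F⟮y⟯ := IntermediateField.adjoin.finiteDimensional hint
  haveI : Finite F⟮y⟯ := Module.finite_of_finite F
  haveI : Fintype F⟮y⟯ := Fintype.ofFinite _
  refine ⟨Module.finrank F F⟮y⟯, Module.finrank_pos, ?_⟩
  have hcard : Fintype.card F⟮y⟯ = q ^ Module.finrank F F⟮y⟯ :=
    Module.card_eq_pow_finrank
  set z : F⟮y⟯ := ⟨y, IntermediateField.mem_adjoin_simple_self F y⟩ with hz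
  have := FiniteField.pow_card z
  rw [hcard] at this
  have := congrArg (Subtype.val) this
  simpa using this

lemma exists_splitsIn {P : Polynomial F} (hP : P ≠ 0) : ∃ j, 0 < j ∧ SplitsIn P j := by
  classical
  have hroot : ∀ y : R, aeval y P = 0 → ∃ d, 0 < d ∧ y ^ q ^ d = y :=
    fun y _ => root_pow_card_fix y
  choose! d hd1 hd2 using hroot
  set s : Finset R := (P.map (algebraMap F R)).roots.toFinset with hs
  have hmem : ∀ y : R, aeval y P = 0 → y ∈ s := by
    intro y hy
    rw [hs, Multiset.mem_toFinset, Polynomial.mem_roots (Polynomial.map_ne_zero hP)]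
    rwa [Polynomial.IsRoot, Polynomial.eval_map, ← aeval_def]
  refine ⟨∏ y ∈ s, max 1 (d y), ?_, ?_⟩
  · exact Finset.prod_pos fun y _ => lt_of_lt_of_le one_pos (le_max_left _ _)
  · intro y hy
    have h1 : 0 < d y := hd1 y hy
    have hdvd : d y ∣ ∏ y ∈ s, max 1 (d y) := by
      have hmax : max 1 (d y) = d y := max_eq_right h1
      calc d y = max 1 (d y) := hmax.symm
        _ ∣ _ := Finset.dvd_prod_of_mem (fun y => max 1 (d y)) (hmem y hy)
    exact pow_q_pow_fix y (hd2 y hy) hdvd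

lemma sDeg_spec {P : Polynomial F} {n : ℕ} (h : polyIter P n ≠ 0) :
    0 < sDeg P n ∧ SplitsIn (polyIter P n) (sDeg P n) :=
  Nat.sInf_mem (s := {j : ℕ | 0 < j ∧ SplitsIn (polyIter P n) j}) (exists_splitsIn h)

lemma sDeg_le {P : Polynomial F} {n j : ℕ} (hj : 0 < j) (h : SplitsIn (polyIter P n) j) :
    sDeg P n ≤ j :=
  Nat.sInf_le ⟨hj, h⟩

end Aux3


section D
variable {F : Type*} [Field F]

lemma natDegree_polyIter (P : Polynomial F) (n : ℕ) :
    (polyIter P n).natDegree = P.natDegree ^ n := by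
  induction n with
  | zero => simp [polyIter]
  | succ n ih => rw [polyIter_succ, Polynomial.natDegree_comp, ih, pow_succ, mul_comm]

lemma coeff_zero_of_additive {p : ℕ} [Fact p.Prime] {A : Polynomial F}
    (hA : IsAdditivePoly p A) : A.coeff 0 = 0 := by
  by_contra h
  obtain ⟨k, hk⟩ := hA 0 h
  exact (pow_ne_zero k (Nat.Prime.ne_zero (Fact.out (p := p.Prime)))) hk.symm

lemma one_le_natDegree_of_additive {p : ℕ} [Fact p.Prime] {A : Polynomial F}
    (hA : IsAdditivePoly p A)
    (hexc : ¬ ∃ (a : F) (h : ℕ), A = Polynomial.C a * Polynomial.X ^ p ^ h) :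
    1 ≤ A.natDegree := by
  by_contra h
  push_neg at h
  have h0 : A.natDegree = 0 := Nat.lt_one_iff.mp h
  have : A = Polynomial.C (A.coeff 0) := Polynomial.eq_C_of_natDegree_eq_zero h0
  rw [coeff_zero_of_additive hA] at this
  exact hexc ⟨0, 0, by rw [this]; simp⟩
end D

noncomputable def betaSeq {F : Type*} [Field F] (A : Polynomial F) (b : F) : ℕ → F
  | 0 => 0
  | n + 1 => A.eval (betaSeq A b n) + b

section Aux4
variable (p : ℕ) [Fact p.Prime] {F : Type*} [Field F] [Fintype F] [CharP F p]

local notation "R" => AlgebraicClosure F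
local notation "q" => Fintype.card F
include p

lemma aeval_polyIter_addC {A : Polynomial F} (hA : IsAdditivePoly p A) (b : F) (n : ℕ)
    (x : R) :
    aeval x (polyIter (A + Polynomial.C b) n)
      = aeval x (polyIter A n) + algebraMap F R (betaSeq A b n) := by
  induction n with
  | zero => simp [polyIter, betaSeq]
  | succ n ih =>
      rw [polyIter_succ, polyIter_succ, aeval_comp, aeval_comp, ih]
      simp only [map_add, aeval_add_of_additive (p := p) hA, aeval_C, betaSeq,
        Polynomial.aeval_algebraMap_apply_eq_algebraMap_eval]
      ring

lemma pow_q_nsmul (j k : ℕ) (x : R) : (k • x) ^ q ^ j = k • (x ^ q ^ j) := by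
  induction k with
  | zero => simp [zero_pow, pow_ne_zero, Fintype.card_ne_zero]
  | succ k ih => rw [succ_nsmul, succ_nsmul, pow_q_add p, ih]

lemma pow_q_translate {s : ℕ} {x d : R} (hx : x ^ q ^ s = x + d) (hd : d ^ q ^ s = d) :
    x ^ q ^ (s * p) = x := by
  have key : ∀ k : ℕ, x ^ q ^ (s * k) = x + k • d := by
    intro k
    induction k with
    | zero => simp
    | succ k ih =>
        have h1 : q ^ (s * (k + 1)) = q ^ (s * k) * q ^ s := by
          rw [← pow_add, Nat.mul_succ]
        rw [h1, pow_mul, ih, pow_q_add p, hx, pow_q_nsmul p, hd, succ_nsmul]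
        ring
  have hp := key p
  have hzero : p • d = 0 := by
    rw [nsmul_eq_mul, CharP.cast_eq_zero R p, zero_mul]
  rw [hp, hzero, add_zero]
end Aux4

section Aux5
variable (p : ℕ) [Fact p.Prime] {F : Type*} [Field F] [Fintype F] [CharP F p]

local notation "R" => AlgebraicClosure F
local notation "q" => Fintype.card F

lemma polyIter_ne_zero {P : Polynomial F} (hd : 1 ≤ P.natDegree) (n : ℕ) :
    polyIter P n ≠ 0 := by
  intro h
  have h2 := natDegree_polyIter P n
  rw [h, Polynomial.natDegree_zero] at h2
  have h3 : 0 < P.natDegree ^ n := pow_pos hd n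
  omega

lemma exists_root_of_natDegree_pos {P : Polynomial F} (hd : 1 ≤ P.natDegree) :
    ∃ x : R, aeval x P = 0 := by
  set Q := P.map (algebraMap F R) with hQ
  have hdeg : Q.degree ≠ 0 := by
    have h1 : 0 < P.degree := Polynomial.natDegree_pos_iff_degree_pos.mp hd
    have h2 : Q.degree = P.degree := Polynomial.degree_map P (algebraMap F R)
    rw [h2]
    exact h1.ne'
  obtain ⟨x, hx⟩ := IsAlgClosed.exists_root Q hdeg
  refine ⟨x, ?_⟩
  rw [aeval_def, ← Polynomial.eval_map]
  exact hx

include p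

lemma sDeg_le_sDeg_addC {A : Polynomial F} (hA : IsAdditivePoly p A)
    (hd : 1 ≤ A.natDegree) (b : F) (n : ℕ) :
    sDeg A n ≤ sDeg (A + Polynomial.C b) n := by
  have hdb : 1 ≤ (A + Polynomial.C b).natDegree := by rwa [Polynomial.natDegree_add_C]
  have hne : polyIter (A + Polynomial.C b) n ≠ 0 := polyIter_ne_zero hdb n
  obtain ⟨hpos, hsp⟩ := sDeg_spec hne
  refine sDeg_le hpos ?_
  intro g hg
  obtain ⟨x0, hx0⟩ := exists_root_of_natDegree_pos
    (P := polyIter (A + Polynomial.C b) n) (by rw [natDegree_polyIter]; exact Nat.one_le_iff_ne_zero.mpr (pow_ne_zero n (by omega)))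
  have hx0g : aeval (x0 + g) (polyIter (A + Polynomial.C b) n) = 0 := by
    rw [aeval_polyIter_addC p hA, aeval_add_polyIter (p := p) hA, hg, add_zero,
      ← aeval_polyIter_addC p hA]
    exact hx0
  have h1 := hsp x0 hx0
  have h2 := hsp (x0 + g) hx0g
  calc g ^ q ^ sDeg (A + Polynomial.C b) n
      = (x0 + g) ^ q ^ sDeg (A + Polynomial.C b) n
        - x0 ^ q ^ sDeg (A + Polynomial.C b) n := by rw [pow_q_add p]; ring
    _ = g := by rw [h1, h2]; ring

lemma sDeg_addC_le {A : Polynomial F} (hA : IsAdditivePoly p A)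
    (hd : 1 ≤ A.natDegree) (b : F) (n : ℕ) :
    sDeg (A + Polynomial.C b) n ≤ p * sDeg A n := by
  have hne : polyIter A n ≠ 0 := polyIter_ne_zero hd n
  obtain ⟨hpos, hsp⟩ := sDeg_spec hne
  set s := sDeg A n with hs
  have hppos : 0 < p := Nat.Prime.pos (Fact.out)
  refine sDeg_le (Nat.mul_pos hppos hpos) ?_
  intro x hx
  have hv : aeval x (polyIter A n) = algebraMap F R (-(betaSeq A b n)) := by
    rw [map_neg]
    have := aeval_polyIter_addC p hA b n x
    rw [hx] at this
    exact eq_neg_of_add_eq_zero_left this.symm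
  set d := x ^ q ^ s - x with hdd
  have hdroot : aeval d (polyIter A n) = 0 := by
    rw [hdd, aeval_sub_polyIter (p := p) hA, ← pow_q_aeval p s (polyIter A n) x, hv, pow_q_algebraMap, sub_self]
  have hdfix : d ^ q ^ s = d := hsp d hdroot
  have hx' : x ^ q ^ s = x + d := by rw [hdd]; ring
  have := pow_q_translate p hx' hdfix
  rwa [mul_comm] at this

lemma sDeg_mono {A : Polynomial F} (hA : IsAdditivePoly p A)
    (hd : 1 ≤ A.natDegree) {n m : ℕ} (h : n ≤ m) : sDeg A n ≤ sDeg A m := by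
  have hne : polyIter A m ≠ 0 := polyIter_ne_zero hd m
  obtain ⟨hpos, hsp⟩ := sDeg_spec hne
  refine sDeg_le hpos ?_
  intro x hx
  apply hsp
  have hm : m = (m - n) + n := (Nat.sub_add_cancel h).symm
  rw [hm, polyIter_add_aeval, hx, aeval_zero_polyIter (p := p) hA]
end Aux5

section Aux6
variable (p : ℕ) [Fact p.Prime] {F : Type*} [Field F] [Fintype F] [CharP F p]

local notation "R" => AlgebraicClosure F
local notation "q" => Fintype.card F
include p

lemma charP_end : CharP (AddMonoid.End R) p := by
  constructor
  intro n
  constructor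
  · intro h
    have h1 := congrArg (fun (f : AddMonoid.End R) => f 1) h
    simp only [AddMonoid.End.natCast_apply] at h1
    rw [nsmul_eq_mul, mul_one] at h1
    have h2 : (0 : AddMonoid.End R) (1 : R) = 0 := rfl
    rw [h2] at h1
    exact (CharP.cast_eq_zero_iff R p n).mp h1
  · intro h
    refine DFunLike.ext _ _ fun x => ?_
    show (n : AddMonoid.End R) x = (0 : AddMonoid.End R) x
    rw [AddMonoid.End.natCast_apply, nsmul_eq_mul, (CharP.cast_eq_zero_iff R p n).mpr h,
      zero_mul]
    rfl

lemma iter_qpow_eq (s : ℕ) {x : R} (h : (fun y : R => y ^ q ^ s - y)^[p] x = 0) :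
    x ^ q ^ (s * p) = x := by
  classical
  set Φ : AddMonoid.End R := AddMonoidHom.mk' (fun y : R => y ^ q ^ s)
      (fun a c => pow_q_add p s a c) with hΦ
  haveI : CharP (AddMonoid.End R) p := charP_end p
  have hcoe : ⇑(Φ - 1) = fun y : R => y ^ q ^ s - y := rfl
  have happly : ∀ (k : ℕ) (y : R), ((Φ - 1) ^ k) y = (fun y : R => y ^ q ^ s - y)^[k] y := by
    intro k
    induction k with
    | zero => intro y; rfl
    | succ k ih =>
        intro y
        rw [pow_succ']
        have : ((Φ - 1) * (Φ - 1) ^ k) y = (Φ - 1) (((Φ - 1) ^ k) y) := rfl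
        rw [this, ih, Function.iterate_succ_apply', hcoe]
  have hsub : (Φ - 1) ^ p = Φ ^ p - 1 := by
    have h1 : (Φ - 1) ^ p = Φ ^ p - 1 ^ p :=
      sub_pow_char_of_commute p (Commute.one_right Φ)
    rwa [one_pow] at h1
  have hΦpow : ∀ (k : ℕ) (y : R), (Φ ^ k) y = y ^ q ^ (s * k) := by
    intro k
    induction k with
    | zero => intro y; rw [pow_zero, Nat.mul_zero, pow_zero, pow_one]; rfl
    | succ k ih =>
        intro y
        rw [pow_succ]
        have h2 : (Φ ^ k * Φ) y = (Φ ^ k) (Φ y) := rfl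
        have h3 : Φ y = y ^ q ^ s := rfl
        rw [h2, h3, ih, ← pow_mul, ← pow_add]
        congr 1
        rw [Nat.mul_succ, Nat.add_comm]
  have h4 : ((Φ - 1) ^ p) x = 0 := by rw [happly]; exact h
  rw [hsub] at h4
  have h5 : (Φ ^ p) x - x = 0 := by
    have : (Φ ^ p - 1 : AddMonoid.End R) x = (Φ ^ p) x - (1 : AddMonoid.End R) x := rfl
    rw [this] at h4
    exact h4
  have h6 := hΦpow p x
  rw [h6] at h5
  exact sub_eq_zero.mp h5

lemma sDeg_p_mul {A : Polynomial F} (hA : IsAdditivePoly p A)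
    (hd : 1 ≤ A.natDegree) (n : ℕ) :
    sDeg A (p * n) ≤ p * sDeg A n := by
  have hne : polyIter A n ≠ 0 := polyIter_ne_zero hd n
  obtain ⟨hpos, hsp⟩ := sDeg_spec hne
  set s := sDeg A n with hs
  have hppos : 0 < p := Nat.Prime.pos (Fact.out)
  refine sDeg_le (Nat.mul_pos hppos hpos) ?_
  have key : ∀ (k : ℕ) (x : R), aeval x (polyIter A (k * n)) = 0 →
      (fun y : R => y ^ q ^ s - y)^[k] x = 0 := by
    intro k
    induction k with
    | zero =>
        intro x hx
        simpa [polyIter] using hx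
    | succ k ih =>
        intro x hx
        have h1 : (k + 1) * n = n + k * n := by ring
        rw [h1, polyIter_add_aeval] at hx
        have hufix : (aeval x (polyIter A (k * n))) ^ q ^ s = aeval x (polyIter A (k * n)) :=
          hsp _ hx
        have hgx : aeval (x ^ q ^ s - x) (polyIter A (k * n)) = 0 := by
          rw [aeval_sub_polyIter (p := p) hA, ← pow_q_aeval p s (polyIter A (k * n)) x,
            hufix, sub_self]
        rw [Function.iterate_succ_apply]
        exact ih _ hgx
  intro x hx
  have h0 : (fun y : R => y ^ q ^ s - y)^[p] x = 0 := key p x hx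
  have := iter_qpow_eq p s h0
  rwa [mul_comm] at this
end Aux6

section Aux7

lemma spow_bound {p : ℕ} {s : ℕ → ℕ} (hpmul : ∀ n, s (p * n) ≤ p * s n) (k n : ℕ) :
    s (p ^ k * n) ≤ p ^ k * s n := by
  induction k with
  | zero => simp
  | succ k ih =>
      have h1 : p ^ (k + 1) * n = p * (p ^ k * n) := by ring
      calc s (p ^ (k + 1) * n) = s (p * (p ^ k * n)) := by rw [h1]
        _ ≤ p * s (p ^ k * n) := hpmul _
        _ ≤ p * (p ^ k * s n) := Nat.mul_le_mul_left p ih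
        _ = p ^ (k + 1) * s n := by ring

lemma ratio_bound {p : ℕ} (hp : 2 ≤ p) {s : ℕ → ℕ}
    (hmono : ∀ a b : ℕ, a ≤ b → s a ≤ s b) (hpmul : ∀ n, s (p * n) ≤ p * s n)
    {n₀ m : ℕ} (h1 : 1 ≤ n₀) (hm : n₀ ≤ m) :
    (s m : ℝ) / m ≤ p * ((s n₀ : ℝ) / n₀) := by
  have hex : ∃ k, m ≤ p ^ k * n₀ := by
    refine ⟨m, ?_⟩
    have h2 : m < p ^ m := Nat.lt_pow_self (by omega : 1 < p)
    calc m ≤ p ^ m := h2.le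
      _ ≤ p ^ m * n₀ := Nat.le_mul_of_pos_right _ (by omega)
  classical
  set k := Nat.find hex with hk
  have hk1 : m ≤ p ^ k * n₀ := Nat.find_spec hex
  have hN : (0 : ℝ) < (n₀ : ℝ) := by
    have : 0 < n₀ := h1
    exact_mod_cast this
  have hM : (0 : ℝ) < (m : ℝ) := by
    have : 0 < m := lt_of_lt_of_le h1 hm
    exact_mod_cast this
  match hkk : k with
  | 0 =>
      have hmn : m = n₀ := le_antisymm (by simpa [hkk] using hk1) hm
      subst hmn
      have hnn : 0 ≤ (s m : ℝ) / m := by positivity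
      have hp1 : (1 : ℝ) ≤ (p : ℝ) := by exact_mod_cast (by omega : 1 ≤ p)
      exact le_mul_of_one_le_left hnn hp1
  | k' + 1 =>
      have hlt : p ^ k' * n₀ < m := by
        have := Nat.find_min hex (by omega : k' < k)
        omega
      have hsm : s m ≤ p ^ (k' + 1) * s n₀ := by
        calc s m ≤ s (p ^ (k' + 1) * n₀) := hmono _ _ hk1
          _ ≤ p ^ (k' + 1) * s n₀ := spow_bound hpmul _ _
      have h1c : (s m : ℝ) ≤ (p : ℝ) * (p : ℝ) ^ k' * (s n₀ : ℝ) := by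
        have hc : ((s m : ℕ) : ℝ) ≤ ((p ^ (k' + 1) * s n₀ : ℕ) : ℝ) := by exact_mod_cast hsm
        push_cast at hc
        calc (s m : ℝ) ≤ (p : ℝ) ^ (k' + 1) * (s n₀ : ℝ) := hc
          _ = (p : ℝ) * (p : ℝ) ^ k' * (s n₀ : ℝ) := by ring
      have h2c : (p : ℝ) ^ k' * (n₀ : ℝ) ≤ (m : ℝ) := by
        have := hlt.le
        exact_mod_cast this
      rw [mul_div_assoc', div_le_div_iff₀ hM hN]
      have ha : (0 : ℝ) ≤ (s n₀ : ℝ) := by positivity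
      have hPa : (0 : ℝ) ≤ (p : ℝ) * (s n₀ : ℝ) := by positivity
      have t1 := mul_le_mul_of_nonneg_right h1c hN.le
      have t2 := mul_le_mul_of_nonneg_left h2c hPa
      nlinarith [t1, t2]

end Aux7

section Aux8

lemma mapClusterPt_le_of_eventually_le {u : ℕ → ℝ} {x B : ℝ}
    (h : MapClusterPt x atTop u) (hB : ∀ᶠ n in atTop, u n ≤ B) : x ≤ B := by
  have h1 : ClusterPt x (Filter.map u atTop) := h
  have h2 : Filter.map u atTop ≤ Filter.principal (Set.Iic B) :=
    le_principal_iff.mpr (mem_map.mpr hB)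
  have h3 : ClusterPt x (Filter.principal (Set.Iic B)) := h1.mono h2
  have h4 : x ∈ closure (Set.Iic B) := mem_closure_iff_clusterPt.mpr h3
  rwa [closure_Iic] at h4

lemma le_mapClusterPt_of_eventually_le {u : ℕ → ℝ} {x B : ℝ}
    (h : MapClusterPt x atTop u) (hB : ∀ᶠ n in atTop, B ≤ u n) : B ≤ x := by
  have h1 : ClusterPt x (Filter.map u atTop) := h
  have h2 : Filter.map u atTop ≤ Filter.principal (Set.Ici B) :=
    le_principal_iff.mpr (mem_map.mpr hB)
  have h3 : ClusterPt x (Filter.principal (Set.Ici B)) := h1.mono h2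
  have h4 : x ∈ closure (Set.Ici B) := mem_closure_iff_clusterPt.mpr h3
  rwa [closure_Ici] at h4

end Aux8


theorem sDeg_affine_div_n_limitPoints (p : ℕ) [Fact p.Prime] (F : Type*) [Field F] [Fintype F]
    [CharP F p] (A : Polynomial F) (hA : IsAdditivePoly p A)
    (hexc : ¬ ∃ (a : F) (h : ℕ), A = Polynomial.C a * Polynomial.X ^ p ^ h)
    (b : F) (hb : b ≠ 0) :
    (∃ C : ℝ, ∀ n : ℕ, 1 ≤ n → (sDeg (A + Polynomial.C b) n : ℝ) / n ≤ C) ∧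
    {x : ℝ | MapClusterPt x Filter.atTop
        (fun n : ℕ => (sDeg (A + Polynomial.C b) n : ℝ) / n)} ⊆
      Set.Icc (Filter.liminf (fun n : ℕ => (sDeg A n : ℝ) / n) Filter.atTop)
        ((p : ℝ) ^ 2 * Filter.liminf (fun n : ℕ => (sDeg A n : ℝ) / n) Filter.atTop) := by
  have hd : 1 ≤ A.natDegree := one_le_natDegree_of_additive hA hexc
  have hp2 : 2 ≤ p := (Fact.out : p.Prime).two_le
  have hppos : (0 : ℝ) < (p : ℝ) := by
    have : 0 < p := by omega
    exact_mod_cast this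
  set s : ℕ → ℕ := fun n => sDeg A n with hsdef
  set t : ℕ → ℕ := fun n => sDeg (A + Polynomial.C b) n with htdef
  set u : ℕ → ℝ := fun n => (s n : ℝ) / n with hudef
  set v : ℕ → ℝ := fun n => (t n : ℝ) / n with hvdef
  set c : ℝ := Filter.liminf u Filter.atTop with hcdef
  have hmono : ∀ a b : ℕ, a ≤ b → s a ≤ s b := fun a b h => sDeg_mono p hA hd h
  have hpmul : ∀ n, s (p * n) ≤ p * s n := fun n => sDeg_p_mul p hA hd n
  have hst : ∀ n, s n ≤ t n := fun n => sDeg_le_sDeg_addC p hA hd b n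
  have hts : ∀ n, t n ≤ p * s n := fun n => sDeg_addC_le p hA hd b n
  have hu_bound : ∀ n₀ m : ℕ, 1 ≤ n₀ → n₀ ≤ m → u m ≤ p * u n₀ := by
    intro n₀ m h1 h2
    exact ratio_bound hp2 hmono hpmul h1 h2
  have huv : ∀ m : ℕ, 1 ≤ m → v m ≤ p * u m := by
    intro m hm
    have hMpos : (0 : ℝ) < (m : ℝ) := by exact_mod_cast hm
    have h1 : (t m : ℝ) ≤ (p : ℝ) * (s m : ℝ) := by exact_mod_cast hts m
    calc v m = (t m : ℝ) / m := rfl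
      _ ≤ ((p : ℝ) * (s m : ℝ)) / m := by gcongr
      _ = (p : ℝ) * u m := by rw [mul_div_assoc]
  have hv_bound : ∀ n₀ m : ℕ, 1 ≤ n₀ → n₀ ≤ m → v m ≤ (p : ℝ) ^ 2 * u n₀ := by
    intro n₀ m h1 h2
    calc v m ≤ p * u m := huv m (le_trans h1 h2)
      _ ≤ p * (p * u n₀) := by
          have := hu_bound n₀ m h1 h2
          nlinarith
      _ = (p : ℝ) ^ 2 * u n₀ := by ring
  have huv_le : ∀ m : ℕ, u m ≤ v m := by
    intro m
    rcases Nat.eq_zero_or_pos m with hm | hm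
    · show (s m : ℝ) / m ≤ (t m : ℝ) / m
      subst hm
      simp
    · have hMpos : (0 : ℝ) < (m : ℝ) := by exact_mod_cast hm
      have h1 : (s m : ℝ) ≤ (t m : ℝ) := by exact_mod_cast hst m
      show (s m : ℝ) / m ≤ (t m : ℝ) / m
      gcongr
  have hub : Filter.IsBoundedUnder (· ≤ ·) Filter.atTop u := by
    refine ⟨(p : ℝ) * u 1, ?_⟩
    rw [Filter.eventually_map]
    filter_upwards [Filter.eventually_ge_atTop 1] with m hm
    exact hu_bound 1 m le_rfl hm
  have hlb : Filter.IsBoundedUnder (· ≥ ·) Filter.atTop u :=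
    Filter.isBoundedUnder_of ⟨0, fun n => by positivity⟩
  constructor
  · refine ⟨(p : ℝ) ^ 2 * u 1, fun n hn => ?_⟩
    exact hv_bound 1 n le_rfl hn
  · rintro x hx
    have hxv : MapClusterPt x Filter.atTop v := hx
    constructor
    · -- c ≤ x
      refine le_of_forall_pos_le_add ?_
      intro ε hε
      have hev2 : ∀ᶠ n in Filter.atTop, c - ε < u n :=
        eventually_lt_of_lt_liminf (by linarith) hlb
      have hev3 : ∀ᶠ n in Filter.atTop, c - ε ≤ v n := by
        filter_upwards [hev2] with n hn
        exact le_trans hn.le (huv_le n)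
      have := le_mapClusterPt_of_eventually_le hxv hev3
      linarith
    · -- x ≤ p^2 * c
      have hp2pos : (0 : ℝ) < (p : ℝ) ^ 2 := by positivity
      refine le_of_forall_pos_le_add ?_
      intro ε hε
      set ε' : ℝ := ε / ((p : ℝ) ^ 2) with hε'def
      have hε'pos : 0 < ε' := by positivity
      have hfreq : ∃ᶠ n in Filter.atTop, u n < c + ε' :=
        frequently_lt_of_liminf_lt hub.isCoboundedUnder_ge (by linarith)
      obtain ⟨n₀, hn₀u, hn₀1⟩ := (hfreq.and_eventually (Filter.eventually_ge_atTop 1)).exists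
      have hev : ∀ᶠ m in Filter.atTop, v m ≤ (p : ℝ) ^ 2 * (c + ε') := by
        filter_upwards [Filter.eventually_ge_atTop n₀] with m hm
        refine le_trans (hv_bound n₀ m hn₀1 hm) ?_
        nlinarith
      have hxle := mapClusterPt_le_of_eventually_le hxv hev
      have : (p : ℝ) ^ 2 * (c + ε') = (p : ℝ) ^ 2 * c + ε := by
        rw [hε'def]
        field_simp
      linarith
end

section
/- Let A ∈ F_q[X] be an additive polynomial that is not of the form aX^{p^h} with a ∈ F_q and h ≥ 0, set M = s_A(1), and let s_0 = max{j > 0 : s_A(j) = M} (this maximum exists, i.e., the set {j > 0 : s_A(j) = M} is finite). Then there exist an additive polynomial R ∈ F_q[X] and an integer r ≥ 1 such that, with A_*(X) := R(X)^q, one has A_*(A^{(s_0)}(X)) = X^{q^{M+r}} − X^{q^r} as polynomials in F_q[X]. -/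
open Polynomial Filter

namespace Aux
variable {F : Type*} [Field F] {p : ℕ}

lemma add_zero' : IsAdditivePoly p (0 : F[X]) := by intro i hi; simp at hi

lemma isAdd_add {A B : F[X]} (hA : IsAdditivePoly p A) (hB : IsAdditivePoly p B) :
    IsAdditivePoly p (A + B) := by
  intro i hi
  rw [coeff_add] at hi
  rcases (by by_contra hc; push_neg at hc; simp [hc.1, hc.2] at hi :
    A.coeff i ≠ 0 ∨ B.coeff i ≠ 0) with h | h
  · exact hA i h
  · exact hB i h

lemma isAdd_sub {A B : F[X]} (hA : IsAdditivePoly p A) (hB : IsAdditivePoly p B) :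
    IsAdditivePoly p (A - B) := by
  intro i hi
  rw [coeff_sub] at hi
  rcases (by by_contra hc; push_neg at hc; simp [hc.1, hc.2] at hi :
    A.coeff i ≠ 0 ∨ B.coeff i ≠ 0) with h | h
  · exact hA i h
  · exact hB i h

lemma isAdd_Cmul {A : F[X]} (a : F) (hA : IsAdditivePoly p A) :
    IsAdditivePoly p (C a * A) := by
  intro i hi
  rw [coeff_C_mul] at hi
  exact hA i (fun h => hi (by rw [h, mul_zero]))

lemma isAdd_Xpow (k : ℕ) : IsAdditivePoly p (X ^ p ^ k : F[X]) := by
  intro i hi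
  rw [coeff_X_pow] at hi
  refine ⟨k, ?_⟩
  by_contra hc
  simp [hc] at hi

lemma isAdd_coeff_zero {A : F[X]} (hp : 1 < p) (hA : IsAdditivePoly p A) : A.coeff 0 = 0 := by
  by_contra hc
  obtain ⟨h, hh⟩ := hA 0 hc
  exact (pow_pos (by omega) h).ne' hh.symm

lemma isAdd_natDeg {A : F[X]} (hA : IsAdditivePoly p A) (h0 : A ≠ 0) :
    ∃ h : ℕ, A.natDegree = p ^ h :=
  hA A.natDegree (fun h => h0 (leadingCoeff_eq_zero.mp h))

lemma isAdd_pow_p [Fact p.Prime] [CharP F p] {A : F[X]} (hA : IsAdditivePoly p A) :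
    IsAdditivePoly p (A ^ p) := by
  have hp : 0 < p := (Fact.out : p.Prime).pos
  intro i hi
  rw [← map_frobenius_expand p A, coeff_map, coeff_expand hp] at hi
  split_ifs at hi with hd
  · obtain ⟨h, hh⟩ := hA (i / p) (fun hz => hi (by rw [hz, map_zero]))
    exact ⟨h + 1, by rw [← Nat.div_mul_cancel hd, hh, pow_succ]⟩
  · exact absurd (map_zero (frobenius F p)) hi

lemma isAdd_pow_ppow [Fact p.Prime] [CharP F p] {A : F[X]} (hA : IsAdditivePoly p A) (k : ℕ) :
    IsAdditivePoly p (A ^ p ^ k) := by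
  induction k with
  | zero => simpa using hA
  | succ n ih => rw [pow_succ, pow_mul]; exact isAdd_pow_p ih

lemma isAdd_comp [Fact p.Prime] [CharP F p] {A B : F[X]} (hA : IsAdditivePoly p A)
    (hB : IsAdditivePoly p B) : IsAdditivePoly p (A.comp B) := by
  intro i hi
  rw [comp_eq_sum_left, Polynomial.sum, finset_sum_coeff] at hi
  obtain ⟨e, he, hne⟩ := Finset.exists_ne_zero_of_sum_ne_zero hi
  obtain ⟨h, rfl⟩ := hA e (mem_support_iff.mp he)
  rw [coeff_C_mul] at hne
  exact isAdd_pow_ppow hB h i (fun hz => hne (by rw [hz, mul_zero]))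


lemma isAdd_derivative [CharP F p] (hp : 1 < p) {A : F[X]} (hA : IsAdditivePoly p A) :
    derivative A = C (A.coeff 1) := by
  ext n
  rw [coeff_derivative]
  rcases Nat.eq_zero_or_pos n with rfl | hn
  · simp
  · rw [coeff_C, if_neg hn.ne']
    by_cases hz : A.coeff (n + 1) = 0
    · rw [hz, zero_mul]
    · obtain ⟨h, hh⟩ := hA (n + 1) hz
      have hh1 : 1 ≤ h := by
        rcases Nat.eq_zero_or_pos h with rfl | h1
        · simp at hh; omega
        · exact h1
      have : ((n : F) + 1) = 0 := by
        have : ((p ^ h : ℕ) : F) = 0 := by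
          rw [Nat.cast_pow, ← one_mul ((p:F) ^ h)]
          have := CharP.cast_eq_zero F p
          rw [this, zero_pow (by omega), mul_zero]
        calc ((n : F) + 1) = ((n + 1 : ℕ) : F) := by push_cast; ring
        _ = ((p ^ h : ℕ) : F) := by rw [hh]
        _ = 0 := this
      rw [this, mul_zero]


lemma isAdd_decomp [Fact p.Prime] [CharP F p] {A : F[X]} (hA : IsAdditivePoly p A) (h0 : A ≠ 0) :
    ∃ (Cc : F[X]) (m : ℕ), IsAdditivePoly p Cc ∧ Cc.coeff 1 ≠ 0 ∧ A = Cc.comp (X ^ p ^ m) := by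
  have hp : 1 < p := (Fact.out : p.Prime).one_lt
  suffices H : ∀ (n : ℕ) (A : F[X]), IsAdditivePoly p A → A ≠ 0 → A.natDegree = n →
      ∃ (Cc : F[X]) (m : ℕ), IsAdditivePoly p Cc ∧ Cc.coeff 1 ≠ 0 ∧ A = Cc.comp (X ^ p ^ m) by
    exact H A.natDegree A hA h0 rfl
  clear hA h0 A
  intro n
  induction n using Nat.strong_induction_on with
  | _ n ih =>
  intro A hA h0 hn
  subst hn
  by_cases h1 : A.coeff 1 ≠ 0
  · exact ⟨A, 0, hA, h1, by rw [pow_zero, pow_one, comp_X]⟩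
  push_neg at h1
  have hder : derivative A = 0 := by rw [isAdd_derivative hp hA, h1, map_zero]
  set B := contract p A with hB
  have hexp : expand F p B = A := expand_contract p hder (by omega)
  have hBA : IsAdditivePoly p B := by
    intro i hi
    rw [hB, coeff_contract (by omega : p ≠ 0)] at hi
    obtain ⟨h, hh⟩ := hA (i * p) hi
    have h1le : 1 ≤ h := by
      by_contra hc
      push_neg at hc
      interval_cases h
      · simp at hh
        rcases hh with ⟨rfl, h2⟩ <;> omega
    refine ⟨h - 1, ?_⟩
    have : i * p = p ^ (h - 1) * p := by
      rw [hh, ← pow_succ]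
      congr 1
      omega
    exact Nat.eq_of_mul_eq_mul_right (by omega) this
  have hB0 : B ≠ 0 := by
    intro hz
    rw [hz, map_zero] at hexp
    exact h0 hexp.symm
  have hAdeg : 1 ≤ A.natDegree := by
    by_contra hc
    push_neg at hc
    have : A = C (A.coeff 0) := eq_C_of_natDegree_eq_zero (by omega)
    rw [isAdd_coeff_zero hp hA, map_zero] at this
    exact h0 this
  have hdeg : B.natDegree < A.natDegree := by
    have h2 : A.natDegree = B.natDegree * p := by rw [← hexp, natDegree_expand]
    nlinarith [(by by_contra hc; push_neg at hc; interval_cases hBn : B.natDegree <;> omega :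
      1 ≤ B.natDegree)]
  obtain ⟨Cc, m, hCc, hCc1, hBC⟩ := ih B.natDegree hdeg B hBA hB0 rfl
  refine ⟨Cc, m + 1, hCc, hCc1, ?_⟩
  rw [← hexp, expand_eq_comp_X_pow, hBC, comp_assoc, X_pow_comp, ← pow_mul, ← pow_succ']


lemma isAdd_div [Fact p.Prime] [CharP F p] {Cc : F[X]} (hC : IsAdditivePoly p Cc)
    (hCd : 0 < Cc.natDegree) (G : F[X]) (hG : IsAdditivePoly p G) :
    ∃ R E : F[X], IsAdditivePoly p R ∧ IsAdditivePoly p E ∧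
      E.natDegree < Cc.natDegree ∧ G = R.comp Cc + E := by
  have hp : 1 < p := (Fact.out : p.Prime).one_lt
  have hC0 : Cc ≠ 0 := fun hz => by simp [hz] at hCd
  suffices H : ∀ (n : ℕ) (G : F[X]), IsAdditivePoly p G → G.natDegree = n →
      ∃ R E : F[X], IsAdditivePoly p R ∧ IsAdditivePoly p E ∧
        E.natDegree < Cc.natDegree ∧ G = R.comp Cc + E by
    exact H G.natDegree G hG rfl
  clear hG G
  intro n
  induction n using Nat.strong_induction_on with
  | _ n ih =>
  intro G hG hn
  subst hn
  by_cases hlt : G.natDegree < Cc.natDegree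
  · exact ⟨0, G, add_zero', hG, hlt, by rw [zero_comp, zero_add]⟩
  push_neg at hlt
  have hG0 : G ≠ 0 := by
    intro hz
    rw [hz, natDegree_zero] at hlt
    omega
  obtain ⟨g, hg⟩ := isAdd_natDeg hG hG0
  obtain ⟨c, hc⟩ := isAdd_natDeg hC hC0
  have hcg : c ≤ g := by
    rw [hg, hc] at hlt
    exact (Nat.pow_le_pow_iff_right hp).mp hlt
  set k := p ^ (g - c) with hk
  have hlcC : Cc.leadingCoeff ≠ 0 := leadingCoeff_ne_zero.mpr hC0
  have hlcG : G.leadingCoeff ≠ 0 := leadingCoeff_ne_zero.mpr hG0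
  set a := G.leadingCoeff / Cc.leadingCoeff ^ k with ha
  have ha0 : a ≠ 0 := div_ne_zero hlcG (pow_ne_zero _ hlcC)
  set T : F[X] := C a * X ^ k with hT
  set Tc : F[X] := C a * Cc ^ k with hTc
  have hTcomp : T.comp Cc = Tc := by rw [hT, hTc, mul_comp, C_comp, X_pow_comp]
  have hTcdeg : Tc.natDegree = G.natDegree := by
    rw [hTc, natDegree_C_mul ha0, Polynomial.natDegree_pow, hg, hc, hk, ← pow_add,
      Nat.sub_add_cancel hcg]
  have hTclc : Tc.leadingCoeff = G.leadingCoeff := by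
    rw [hTc, leadingCoeff_mul, leadingCoeff_C, leadingCoeff_pow, ha,
      div_mul_cancel₀ _ (pow_ne_zero _ hlcC)]
  have hTadd : IsAdditivePoly p T := isAdd_Cmul a (isAdd_Xpow (g - c))
  have hTcadd : IsAdditivePoly p Tc := isAdd_Cmul a (isAdd_pow_ppow hC (g - c))
  set G1 := G - Tc with hG1
  by_cases hz : G1 = 0
  · refine ⟨T, 0, hTadd, add_zero', hCd, ?_⟩
    rw [hTcomp, add_zero]
    have : G = Tc := by rwa [hG1, sub_eq_zero] at hz
    exact this
  · have hTc0 : Tc ≠ 0 := fun h => by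
      rw [h, leadingCoeff_zero] at hTclc
      exact hlcG hTclc.symm
    have hdeglt : G1.natDegree < G.natDegree := by
      refine natDegree_lt_natDegree hz ?_
      refine degree_sub_lt ?_ hG0 hTclc.symm
      rw [degree_eq_natDegree hG0, degree_eq_natDegree hTc0, hTcdeg]
    have hG1add : IsAdditivePoly p G1 := isAdd_sub hG hTcadd
    obtain ⟨R1, E, hR1, hE, hEd, hdiv⟩ := ih G1.natDegree hdeglt G1 hG1add rfl
    refine ⟨T + R1, E, isAdd_add hTadd hR1, hE, hEd, ?_⟩
    rw [Polynomial.add_comp, hTcomp]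
    have : G = Tc + G1 := by rw [hG1]; ring
    rw [this, hdiv]
    ring


lemma isAdd_X : IsAdditivePoly p (X : F[X]) := by
  intro i hi
  rw [coeff_X] at hi
  have : 1 = i := by by_contra hc; simp [hc] at hi
  exact ⟨0, by rw [pow_zero]; omega⟩

end Aux

open Aux

section Iter
variable {F : Type*} [Field F]

lemma polyIter_succ_s6 (A : F[X]) (n : ℕ) : polyIter A (n + 1) = A.comp (polyIter A n) :=
  Function.iterate_succ_apply' _ _ _

lemma polyIter_isAdd {p : ℕ} [Fact p.Prime] [CharP F p] {A : F[X]} (hA : IsAdditivePoly p A)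
    (n : ℕ) : IsAdditivePoly p (polyIter A n) := by
  induction n with
  | zero => exact isAdd_X
  | succ n ih => rw [polyIter_succ_s6]; exact isAdd_comp hA ih

lemma polyIter_natDegree (A : F[X]) (n : ℕ) :
    (polyIter A n).natDegree = A.natDegree ^ n := by
  induction n with
  | zero => simp [polyIter]
  | succ n ih => rw [polyIter_succ_s6, natDegree_comp, ih, pow_succ]; ring

lemma polyIter_ne_zero_s6 {A : F[X]} (hd : 1 ≤ A.natDegree) (n : ℕ) : polyIter A n ≠ 0 := by
  intro hz
  have := polyIter_natDegree A n
  rw [hz, natDegree_zero] at this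
  have := Nat.one_le_pow n A.natDegree hd
  omega

end Iter

section Fin
open IntermediateField
variable {F : Type*} [Field F] [Fintype F]

lemma exists_pow_card (y : AlgebraicClosure F) :
    ∃ d : ℕ, 0 < d ∧ y ^ Fintype.card F ^ d = y := by
  have hy : IsIntegral F y := Algebra.IsIntegral.isIntegral y
  have : FiniteDimensional F F⟮y⟯ := IntermediateField.adjoin.finiteDimensional hy
  have : Finite F⟮y⟯ := Module.finite_of_finite F
  have : Fintype F⟮y⟯ := Fintype.ofFinite _
  obtain ⟨n, hn⟩ := VectorSpace.card_fintype F F⟮y⟯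
  have hn0 : 0 < n := by
    rcases Nat.eq_zero_or_pos n with rfl | h
    · exfalso
      rw [pow_zero] at hn
      exact absurd hn (by have := Fintype.one_lt_card (α := F⟮y⟯); omega)
    · exact h
  let y' : F⟮y⟯ := ⟨y, IntermediateField.mem_adjoin_simple_self F y⟩
  have := FiniteField.pow_card y'
  rw [hn] at this
  refine ⟨n, hn0, ?_⟩
  have := congrArg (Subtype.val) this
  push_cast at this
  simpa using this

lemma pow_card_of_dvd {K : Type*} [Field K] {q : ℕ} {y : K} {a b : ℕ} (hy : y ^ q ^ a = y)
    (hab : a ∣ b) : y ^ q ^ b = y := by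
  obtain ⟨k, rfl⟩ := hab
  induction k with
  | zero => simp
  | succ k ih =>
    have : q ^ (a * (k + 1)) = q ^ (a * k) * q ^ a := by rw [← pow_add]; ring_nf
    rw [this, pow_mul, ih, hy]

lemma splitsIn_nonempty {P : F[X]} (hP : P ≠ 0) :
    ∃ j : ℕ, 0 < j ∧ ∀ y : AlgebraicClosure F, Polynomial.aeval y P = 0 →
      y ^ Fintype.card F ^ j = y := by
  classical
  set K := AlgebraicClosure F
  set ι := algebraMap F K
  set t := (P.map ι).roots.toFinset with ht
  choose d hd0 hd using fun y : K => exists_pow_card (F := F) y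
  refine ⟨∏ y ∈ t, d y, ?_, ?_⟩
  · exact Finset.prod_pos (fun y _ => hd0 y)
  · intro y hy
    have hmap : P.map ι ≠ 0 :=
      (Polynomial.map_ne_zero_iff (algebraMap F K).injective).mpr hP
    have hyt : y ∈ t := by
      rw [ht, Multiset.mem_toFinset, mem_roots hmap]
      rw [IsRoot, eval_map]
      rw [aeval_def] at hy
      exact hy
    exact pow_card_of_dvd (hd y) (Finset.dvd_prod_of_mem d hyt)

end Fin


theorem exists_companion_polynomial (p : ℕ) [Fact p.Prime] (F : Type*) [Field F] [Fintype F]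
    [CharP F p] (A : Polynomial F) (hA : IsAdditivePoly p A)
    (hexc : ¬ ∃ (a : F) (h : ℕ), A = Polynomial.C a * Polynomial.X ^ p ^ h) :
    {j : ℕ | 0 < j ∧ sDeg A j = sDeg A 1}.Finite ∧
    ∃ (R : Polynomial F) (r : ℕ), IsAdditivePoly p R ∧ 1 ≤ r ∧
      (R ^ Fintype.card F).comp
          (polyIter A (sSup {j : ℕ | 0 < j ∧ sDeg A j = sDeg A 1})) =
        Polynomial.X ^ Fintype.card F ^ (sDeg A 1 + r) -
          Polynomial.X ^ Fintype.card F ^ r := by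
  classical
  have hp1 : 1 < p := (Fact.out : p.Prime).one_lt
  set q := Fintype.card F with hqdef
  have hq2 : 1 < q := Fintype.one_lt_card
  obtain ⟨fpn, hpp, hqpf⟩ := FiniteField.card F p
  rw [← hqdef] at hqpf
  set f := (fpn : ℕ) with hfdef
  have hf0 : 0 < f := fpn.2
  set K := AlgebraicClosure F with hK
  set ι : F →+* K := algebraMap F K with hι
  have hA0 : A ≠ 0 := fun hz => hexc ⟨0, 0, by rw [hz, map_zero, zero_mul]⟩
  have hAdeg : 1 ≤ A.natDegree := by
    by_contra hc
    push_neg at hc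
    have h0 : A = C (A.coeff 0) := eq_C_of_natDegree_eq_zero (by omega)
    rw [isAdd_coeff_zero hp1 hA, map_zero] at h0
    exact hA0 h0
  have hAm0 : A.map ι ≠ 0 := (Polynomial.map_ne_zero_iff ι.injective).mpr hA0
  -- A has a nonzero root in K
  obtain ⟨z, hz0, hzroot⟩ : ∃ z : K, z ≠ 0 ∧ (A.map ι).eval z = 0 := by
    by_contra hc
    push_neg at hc
    apply hexc
    obtain ⟨h, hh⟩ := isAdd_natDeg hA hA0
    refine ⟨A.coeff (p ^ h), h, ?_⟩
    have hroots0 : ∀ x ∈ (A.map ι).roots, x = 0 := by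
      intro x hx
      by_contra hx0
      exact (hc x hx0) ((mem_roots hAm0).mp hx)
    have hfact : A.map ι = C (ι A.leadingCoeff) * X ^ A.natDegree := by
      have hsp : Splits (A.map ι) := IsAlgClosed.splits _
      have h1 := hsp.eq_prod_roots
      rw [leadingCoeff_map] at h1
      have h2 : (Multiset.map (fun a => X - C a) (A.map ι).roots) =
          Multiset.map (fun _ => (X : K[X])) (A.map ι).roots := by
        apply Multiset.map_congr rfl
        intro x hx
        rw [hroots0 x hx, map_zero, sub_zero]
      rw [h1, h2, Multiset.map_const', Multiset.prod_replicate,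
        ← hsp.natDegree_eq_card_roots, natDegree_map]
    ext i
    rw [coeff_C_mul, coeff_X_pow]
    by_cases hi : i = p ^ h
    · rw [if_pos hi, mul_one, hi]
    · rw [if_neg hi, mul_zero]
      have : (A.map ι).coeff i = 0 := by
        rw [hfact, coeff_C_mul, coeff_X_pow, if_neg (by omega : ¬ i = A.natDegree), mul_zero]
      rw [coeff_map] at this
      exact (_root_.map_eq_zero ι).mp this
  -- sDeg is attained
  have hmem : ∀ n : ℕ, 0 < sDeg A n ∧ SplitsIn (polyIter A n) (sDeg A n) := by
    intro n
    obtain ⟨j, hj0, hjs⟩ := splitsIn_nonempty (polyIter_ne_zero_s6 hAdeg n)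
    exact Nat.sInf_mem (⟨j, hj0, hjs⟩ :
      {j : ℕ | 0 < j ∧ SplitsIn (polyIter A n) j}.Nonempty)
  set M := sDeg A 1 with hM
  have hM0 : 0 < M := (hmem 1).1
  -- growth of root sets
  set B : ℕ → K[X] := fun j => (polyIter A j).map ι with hB
  have hB0 : ∀ j, B j ≠ 0 := fun j =>
    (Polynomial.map_ne_zero_iff ι.injective).mpr (polyIter_ne_zero_s6 hAdeg j)
  have hBdeg : ∀ j, 1 ≤ (B j).natDegree := by
    intro j
    rw [hB]
    simp only [natDegree_map, polyIter_natDegree]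
    exact Nat.one_le_pow _ _ hAdeg
  set W : ℕ → Finset K := fun j => (B j).roots.toFinset with hW
  have hBsucc : ∀ j, B (j + 1) = (A.map ι).comp (B j) := by
    intro j
    rw [hB]
    simp only [polyIter_succ_s6, Polynomial.map_comp]
  have hA0eval : (A.map ι).eval 0 = 0 := by
    rw [← coeff_zero_eq_eval_zero, coeff_map, isAdd_coeff_zero hp1 hA, map_zero]
  have hWmono : ∀ j, W j ⊆ W (j + 1) := by
    intro j y hy
    rw [hW, Multiset.mem_toFinset, mem_roots (hB0 (j+1))]
    rw [hW, Multiset.mem_toFinset, mem_roots (hB0 j)] at hy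
    rw [hBsucc, IsRoot, eval_comp, hy, hA0eval]
  have hWstrict : ∀ j, ∃ x, x ∈ W (j + 1) ∧ x ∉ W j := by
    intro j
    have hdeg : 0 < (B j - C z).degree := by
      rw [degree_sub_C (by rw [degree_eq_natDegree (hB0 j)]; exact_mod_cast hBdeg j)]
      rw [degree_eq_natDegree (hB0 j)]
      exact_mod_cast hBdeg j
    obtain ⟨x, hx⟩ := IsAlgClosed.exists_root (B j - C z) hdeg.ne'
    have hxz : (B j).eval x = z := by
      have := hx
      rw [IsRoot, eval_sub, eval_C, sub_eq_zero] at this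
      exact this
    refine ⟨x, ?_, ?_⟩
    · rw [hW, Multiset.mem_toFinset, mem_roots (hB0 (j+1))]
      rw [hBsucc, IsRoot, eval_comp, hxz, hzroot]
    · rw [hW, Multiset.mem_toFinset, mem_roots (hB0 j)]
      intro hroot
      rw [IsRoot, hxz] at hroot
      exact hz0 hroot
  have hWcard : ∀ j, j + 1 ≤ (W j).card := by
    intro j
    induction j with
    | zero =>
      have h0 : (0 : K) ∈ W 0 := by
        rw [hW, Multiset.mem_toFinset]
        have : B 0 = X := by rw [hB]; simp [polyIter]
        rw [this, roots_X]
        simp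
      exact Finset.card_pos.mpr ⟨0, h0⟩
    | succ j ih =>
      obtain ⟨x, hx1, hx2⟩ := hWstrict j
      have hss : W j ⊂ W (j + 1) := ⟨hWmono j, fun hsub => hx2 (hsub hx1)⟩
      have := Finset.card_lt_card hss
      omega
  -- bound on the set S
  have hSsub : {j : ℕ | 0 < j ∧ sDeg A j = sDeg A 1} ⊆ Set.Iic (q ^ M) := by
    rintro j ⟨hj0, hjM⟩
    have hsplit : SplitsIn (polyIter A j) M := by
      rw [hM, ← hjM]
      exact (hmem j).2
    set XQ : K[X] := X ^ q ^ M - X with hXQ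
    have hqM2 : 2 ≤ q ^ M := le_trans hq2 (Nat.le_self_pow (by omega) q)
    have hXQdeg : XQ.natDegree = q ^ M := by
      rw [hXQ, natDegree_sub_eq_left_of_natDegree_lt] <;>
        simp only [natDegree_X_pow, natDegree_X]
      omega
    have hXQ0 : XQ ≠ 0 := fun h => by rw [h, natDegree_zero] at hXQdeg; omega
    have hsub : W j ⊆ XQ.roots.toFinset := by
      intro y hy
      rw [hW, Multiset.mem_toFinset, mem_roots (hB0 j)] at hy
      rw [Multiset.mem_toFinset, mem_roots hXQ0]
      have hfix : y ^ q ^ M = y := hsplit y (by rw [aeval_def, ← eval_map]; exact hy)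
      rw [hXQ, IsRoot, eval_sub, eval_pow, eval_X, hfix, sub_self]
    have hc1 : (W j).card ≤ q ^ M := by
      calc (W j).card ≤ XQ.roots.toFinset.card := Finset.card_le_card hsub
        _ ≤ Multiset.card XQ.roots := Multiset.toFinset_card_le _
        _ ≤ XQ.natDegree := card_roots' XQ
        _ = q ^ M := hXQdeg
    have := hWcard j
    simp only [Set.mem_Iic]
    omega
  have hSfin : {j : ℕ | 0 < j ∧ sDeg A j = sDeg A 1}.Finite :=
    (Set.finite_Iic _).subset hSsub
  refine ⟨hSfin, ?_⟩
  -- s0 and B0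
  have hS1 : (1 : ℕ) ∈ {j : ℕ | 0 < j ∧ sDeg A j = sDeg A 1} := ⟨one_pos, rfl⟩
  have hs0mem := Nat.sSup_mem ⟨1, hS1⟩ (hSfin.bddAbove)
  set s0 := sSup {j : ℕ | 0 < j ∧ sDeg A j = sDeg A 1} with hs0def
  obtain ⟨hs0pos, hs0M⟩ := hs0mem
  set B0 := polyIter A s0 with hB0def
  have hB0add : IsAdditivePoly p B0 := polyIter_isAdd hA s0
  have hB0ne : B0 ≠ 0 := polyIter_ne_zero_s6 hAdeg s0
  have hsplitB0 : SplitsIn B0 M := by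
    rw [hM, ← hs0M]
    exact (hmem s0).2
  obtain ⟨Cc, m, hCc, hCc1, hB0C⟩ := isAdd_decomp hB0add hB0ne
  have hCcd : 0 < Cc.natDegree := le_natDegree_of_ne_zero hCc1
  have hCc0 : Cc ≠ 0 := fun h => hCc1 (by rw [h, coeff_zero])
  have hsep : Cc.Separable := ⟨0, C (Cc.coeff 1)⁻¹, by
    rw [isAdd_derivative hp1 hCc, zero_mul, zero_add, ← C_mul, inv_mul_cancel₀ hCc1, C_1]⟩
  set Cm := Cc.map ι with hCm
  have hCm0 : Cm ≠ 0 := (Polynomial.map_ne_zero_iff ι.injective).mpr hCc0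
  set WC := Cm.roots.toFinset with hWC
  have hWCcard : WC.card = Cc.natDegree := by
    rw [hWC, Multiset.toFinset_card_eq_card_iff_nodup.mpr (nodup_roots (hsep.map (f := ι)))]
    rw [← natDegree_map ι]
    exact (IsAlgClosed.splits Cm).natDegree_eq_card_roots.symm
  have hB0map : B0.map ι = Cm.comp (X ^ p ^ m) := by
    rw [hB0C, Polynomial.map_comp, Polynomial.map_pow, map_X]
  have hWCfix : ∀ w ∈ WC, w ^ q ^ M = w := by
    intro w hw
    obtain ⟨x, hx⟩ : ∃ x : K, x ^ p ^ m = w :=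
      IsAlgClosed.exists_pow_nat_eq w (n := p ^ m) (by positivity)
    have hwroot : Cm.eval w = 0 := (mem_roots hCm0).mp (Multiset.mem_toFinset.mp hw)
    have hroot : Polynomial.aeval x B0 = 0 := by
      rw [aeval_def, ← eval_map, hB0map, eval_comp, eval_pow, eval_X, hx, hwroot]
    have hxfix : x ^ q ^ M = x := hsplitB0 x hroot
    calc w ^ q ^ M = (x ^ p ^ m) ^ q ^ M := by rw [hx]
      _ = (x ^ q ^ M) ^ p ^ m := by rw [← pow_mul, mul_comm, pow_mul]
      _ = w := by rw [hxfix, hx]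
  -- the polynomial X^{q^M} - X over F
  set Gq : F[X] := X ^ q ^ M - X with hGq
  have hGqadd : IsAdditivePoly p Gq := by
    intro i hi
    rw [hGq, coeff_sub, coeff_X_pow, coeff_X] at hi
    by_cases h1 : i = q ^ M
    · exact ⟨f * M, by rw [h1, hqpf, ← pow_mul]⟩
    by_cases h2 : i = 1
    · exact ⟨0, by rw [pow_zero, h2]⟩
    exfalso
    rw [if_neg h1, if_neg (fun hh : (1 : ℕ) = i => h2 hh.symm)] at hi
    simp at hi
  set t := m / f + 1 with htdef
  set u := f * t - m with hudef
  have hmu : m + u = f * t := by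
    have h1 := Nat.div_add_mod m f
    have h2 : m % f < f := Nat.mod_lt _ hf0
    have h3 : f * t = f * (m / f) + f := by rw [htdef, Nat.mul_succ]
    omega
  obtain ⟨R1, E, hR1, hEadd, hEd, hdiv⟩ := isAdd_div hCc hCcd (Gq ^ p ^ u)
    (isAdd_pow_ppow hGqadd u)
  have hE0 : E = 0 := by
    by_contra hEne
    have hEm0 : E.map ι ≠ 0 := (Polynomial.map_ne_zero_iff ι.injective).mpr hEne
    have hsubE : WC ⊆ (E.map ι).roots.toFinset := by
      intro w hw
      rw [Multiset.mem_toFinset, mem_roots hEm0]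
      have h1 : E = Gq ^ p ^ u - R1.comp Cc := by rw [hdiv]; ring
      have e1 : eval w ((Gq ^ p ^ u).map ι) = 0 := by
        rw [Polynomial.map_pow, eval_pow, hGq, Polynomial.map_sub, Polynomial.map_pow,
          map_X, eval_sub, eval_pow, eval_X, hWCfix w hw, sub_self,
          zero_pow (pow_ne_zero _ (by omega))]
      have hwroot : Cm.eval w = 0 := (mem_roots hCm0).mp (Multiset.mem_toFinset.mp hw)
      have e2 : eval w ((R1.comp Cc).map ι) = 0 := by
        rw [Polynomial.map_comp, eval_comp, ← hCm, hwroot, ← coeff_zero_eq_eval_zero,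
          coeff_map, isAdd_coeff_zero hp1 hR1, map_zero]
      rw [IsRoot, h1, Polynomial.map_sub, eval_sub, e1, e2, sub_zero]
    have hcard : WC.card ≤ E.natDegree := by
      calc WC.card ≤ (E.map ι).roots.toFinset.card := Finset.card_le_card hsubE
        _ ≤ Multiset.card (E.map ι).roots := Multiset.toFinset_card_le _
        _ ≤ (E.map ι).natDegree := card_roots' _
        _ = E.natDegree := natDegree_map ι
    exact absurd hEd (not_lt.mpr (hWCcard ▸ hcard))
  rw [hE0, add_zero] at hdiv
  -- key identity
  have hGcomp : Gq.comp (X ^ p ^ m) = Gq ^ p ^ m := by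
    rw [hGq, sub_comp, X_pow_comp, X_comp, sub_pow_char_pow, ← pow_mul, ← pow_mul, mul_comm]
  have hkey : R1.comp B0 = Gq ^ q ^ t := by
    rw [hB0C, ← comp_assoc, ← hdiv, pow_comp, hGcomp, ← pow_mul, ← pow_add, hmu, hqpf,
      ← pow_mul, mul_comm f t, pow_mul]
  have hfinal : ∀ r : ℕ, Gq ^ q ^ r = X ^ q ^ (M + r) - X ^ q ^ r := by
    intro r
    have hqr : q ^ r = p ^ (f * r) := by rw [hqpf, ← pow_mul]
    rw [pow_add, pow_mul, hqr, hGq]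
    exact sub_pow_char_pow _ _ _
  refine ⟨R1, t + 1, hR1, Nat.le_add_left 1 t, ?_⟩
  rw [pow_comp, hkey, ← pow_mul, ← pow_succ, hfinal (t + 1)]
end
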